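/- arXiv:1407.0836 — 2 statements merged into one kernel-verified Lean document; each statement's English description precedes it below -/
import Mathlib

section
/- Let ρ be a symmetric probability measure on ℝ which is not the Dirac mass at 0, and define the Cramér transform I(x,y) = sup over (u,v) ∈ ℝ² of (u x + v y - log ∫ exp(u z + v z^2) dρ(z)). Then for all nonzero reals x and y, I(x,y) > x^2/(2y). -/
/-!
Take `u = x / y` and `v = -u ^ 2 / 2`, so that `u * x + v * y = x ^ 2 / (2 * y)`; it remains to
see that `∫ exp (u z - u² z² / 2) dρ < 1`. Averaging over `z ↦ -z`, which preserves `ρ`, turns the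
integrand into `cosh (u z) / exp ((u z)² / 2)`, which is at most `1` everywhere and strictly less
than `1` off `z = 0`, a set that `ρ` charges since `ρ ≠ δ₀`.
-/

open MeasureTheory Real

theorem Real.cosh_lt_exp_half_sq {t : ℝ} (ht : t ≠ 0) : cosh t < exp (t ^ 2 / 2) := by
  set a := exp (t ^ 2 / 4) with ha_def
  have ha : 1 < a := one_lt_exp_iff.2 (by positivity)
  have hhalf : cosh (t / 2) ^ 2 ≤ a := by
    calc cosh (t / 2) ^ 2 ≤ exp ((t / 2) ^ 2 / 2) ^ 2 :=
          pow_le_pow_left₀ (cosh_pos _).le (cosh_le_exp_half_sq _) 2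
      _ = a := by rw [ha_def, ← exp_nat_mul]; congr 1; ring
  calc cosh t = 2 * cosh (t / 2) ^ 2 - 1 := by
        rw [← add_halves t, cosh_add, ← sq, ← sq, sinh_sq]; ring_nf
    _ ≤ 2 * a - 1 := by linarith
    _ < a ^ 2 := by nlinarith
    _ = exp (t ^ 2 / 2) := by rw [ha_def, ← exp_nat_mul]; congr 1; ring

theorem Real.exp_sub_half_sq_add_exp_neg_sub_half_sq (t : ℝ) :
    exp (t - t ^ 2 / 2) + exp (-t - t ^ 2 / 2) = 2 * cosh t / exp (t ^ 2 / 2) := by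
  rw [cosh_eq, exp_sub, exp_sub]; ring

theorem MeasureTheory.measure_compl_singleton_ne_zero_of_ne_dirac {α : Type*}
    [MeasurableSpace α] [MeasurableSingletonClass α] {μ : Measure α} [IsProbabilityMeasure μ]
    {a : α} (hμ : μ ≠ Measure.dirac a) : μ {a}ᶜ ≠ 0 := by
  contrapose! hμ
  have hmem : ∀ᵐ x ∂μ, x ∈ ({a} : Set α) := mem_ae_iff.2 hμ
  have hone : μ {a} = 1 := (prob_compl_eq_zero_iff (measurableSet_singleton a)).1 hμ
  rw [← Measure.restrict_eq_self_of_ae_mem hmem, Measure.restrict_singleton, hone, one_smul]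

theorem MeasureTheory.lintegral_ofReal_exp_mul_sub_half_sq_lt_one {μ : Measure ℝ}
    [IsProbabilityMeasure μ] [μ.IsNegInvariant] (hμ : μ {0}ᶜ ≠ 0) {u : ℝ} (hu : u ≠ 0) :
    ∫⁻ z, ENNReal.ofReal (exp (u * z + -(u ^ 2) / 2 * z ^ 2)) ∂μ < 1 := by
  set f : ℝ → ENNReal := fun z => ENNReal.ofReal (exp (u * z + -(u ^ 2) / 2 * z ^ 2))
  have hsymm (z : ℝ) :
      f z + f (-z) = ENNReal.ofReal (2 * cosh (u * z) / exp ((u * z) ^ 2 / 2)) := by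
    rw [← ENNReal.ofReal_add (exp_nonneg _) (exp_nonneg _),
      ← exp_sub_half_sq_add_exp_neg_sub_half_sq]
    ring_nf
  have hle (z : ℝ) : 2 * cosh (u * z) / exp ((u * z) ^ 2 / 2) ≤ 2 := by
    rw [div_le_iff₀ (exp_pos _)]
    linarith [cosh_le_exp_half_sq (u * z)]
  have hlt (z : ℝ) (hz : z ≠ 0) : 2 * cosh (u * z) / exp ((u * z) ^ 2 / 2) < 2 := by
    rw [div_lt_iff₀ (exp_pos _)]
    linarith [cosh_lt_exp_half_sq (mul_ne_zero hu hz)]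
  have htwice : 2 * ∫⁻ z, f z ∂μ < 2 := calc
    2 * ∫⁻ z, f z ∂μ = ∫⁻ z, f z + f (-z) ∂μ := by
      rw [lintegral_add_left (by fun_prop), lintegral_neg_eq_self, two_mul]
    _ < ∫⁻ _, ENNReal.ofReal 2 ∂μ := by
      simp_rw [hsymm]
      refine lintegral_strict_mono_of_ae_le_of_ae_lt_on (by fun_prop) ?_
        (.of_forall fun z => ENNReal.ofReal_le_ofReal (hle z)) hμ
        (.of_forall fun z hz => (ENNReal.ofReal_lt_ofReal_iff two_pos).2 (hlt z hz))
      exact ((lintegral_mono fun z => ENNReal.ofReal_le_ofReal (hle z)).trans_lt (by simp)).ne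
    _ = 2 := by simp
  simpa using (ENNReal.mul_lt_mul_iff_right two_ne_zero ENNReal.ofNat_ne_top).1
    (by simpa using htwice)

theorem EReal.coe_lt_coe_sub_log_of_lt_one {a : ℝ} {c : ENNReal} (hc : c < 1) :
    (a : EReal) < a - ENNReal.log c := by
  simpa using EReal.sub_lt_sub_of_le_of_gt (le_refl (a : EReal)) (ENNReal.log_lt_zero_iff.2 hc)
    (EReal.coe_ne_top a) (EReal.coe_ne_bot a)

theorem cramer_transform_gt
    (ρ : Measure ℝ) [IsProbabilityMeasure ρ]
    (hsym : ρ.map (fun z => -z) = ρ) (hρ : ρ ≠ Measure.dirac 0)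
    (I : ℝ → ℝ → EReal)
    (hI : ∀ x y : ℝ, I x y = ⨆ (u : ℝ) (v : ℝ),
      (((u * x + v * y : ℝ) : EReal)
        - ENNReal.log (∫⁻ z, ENNReal.ofReal (Real.exp (u * z + v * z ^ 2)) ∂ρ)))
    (x y : ℝ) (hx : x ≠ 0) (hy : y ≠ 0) :
    ((x ^ 2 / (2 * y) : ℝ) : EReal) < I x y := by
  have : ρ.IsNegInvariant := ⟨hsym⟩
  simp_rw [hI, lt_iSup_iff]
  refine ⟨x / y, -(x / y) ^ 2 / 2, ?_⟩
  rw [show x / y * x + -(x / y) ^ 2 / 2 * y = x ^ 2 / (2 * y) by field_simp; ring]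
  exact EReal.coe_lt_coe_sub_log_of_lt_one <| lintegral_ofReal_exp_mul_sub_half_sq_lt_one
    (measure_compl_singleton_ne_zero_of_ne_dirac hρ) (div_ne_zero hx hy)
end

section
/- Let ρ be a symmetric probability measure on ℝ which is not the Dirac mass at 0, and let x, y be nonzero reals. Then (x/y)·x + (-x²/(2y²))·y - log ∫ exp((x/y) z - (x²/(2y²)) z²) dρ(z) > x²/(2y). -/
/-!
With `t = x / y` the two linear terms add up to `x² / (2y)`, so the claim is that
`∫ exp (t z - (t z)² / 2) dρ < 1`. By the symmetry of `ρ` this integral equals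
`∫ cosh (t z) / exp ((t z)² / 2) dρ`, and `cosh u < exp (u² / 2)` for `u ≠ 0` (compare the power
series termwise: `(2n)! ≥ 2ⁿ n!`, strictly from `n = 2` on). Since `ρ ≠ δ₀` gives `ρ {0}ᶜ > 0`,
the integral is strictly below `1`, i.e. its logarithm is negative.
-/

open MeasureTheory

namespace Real

lemma cosh_lt_exp_half_sq_s13 {u : ℝ} (hu : u ≠ 0) : cosh u < exp (u ^ 2 / 2) := by
  rw [cosh_eq_tsum, exp_eq_exp_ℝ, NormedSpace.exp_eq_tsum ℝ]
  refine u.hasSum_cosh.summable.tsum_lt_tsum (i := 2) (fun i ↦ ?_) ?_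
    (NormedSpace.expSeries_summable' (u ^ 2 / 2))
  · simp only [div_pow, pow_mul, smul_eq_mul, inv_mul_eq_div, div_div]
    gcongr
    norm_cast
    exact Nat.two_pow_mul_factorial_le_factorial_two_mul _
  · have : 0 < (u ^ 2) ^ 2 := by positivity
    norm_num [Nat.factorial, div_pow, ← pow_mul]
    linarith

lemma exp_sub_half_sq_add_exp_neg_sub_half_sq_s13 (u : ℝ) :
    exp (u - u ^ 2 / 2) + exp (-u - (-u) ^ 2 / 2) = 2 * cosh u / exp (u ^ 2 / 2) := by
  rw [cosh_eq, sub_eq_add_neg, sub_eq_add_neg, exp_add, exp_add, neg_sq, exp_neg]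
  field_simp

lemma exp_sub_half_sq_add_exp_neg_sub_half_sq_le_two (u : ℝ) :
    exp (u - u ^ 2 / 2) + exp (-u - (-u) ^ 2 / 2) ≤ 2 := by
  rw [exp_sub_half_sq_add_exp_neg_sub_half_sq_s13, div_le_iff₀ (exp_pos _)]
  linarith [cosh_le_exp_half_sq u]

lemma exp_sub_half_sq_add_exp_neg_sub_half_sq_lt_two {u : ℝ} (hu : u ≠ 0) :
    exp (u - u ^ 2 / 2) + exp (-u - (-u) ^ 2 / 2) < 2 := by
  rw [exp_sub_half_sq_add_exp_neg_sub_half_sq_s13, div_lt_iff₀ (exp_pos _)]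
  linarith [cosh_lt_exp_half_sq_s13 hu]

end Real

namespace MeasureTheory

lemma Measure.measure_compl_singleton_ne_zero {α : Type*} [MeasurableSpace α]
    [MeasurableSingletonClass α] {μ : Measure α} [IsProbabilityMeasure μ] {a : α}
    (hμ : μ ≠ Measure.dirac a) : μ {a}ᶜ ≠ 0 := by
  contrapose! hμ
  have h := (Measure.ae_mem_finset_iff (s := {a})).1 (ae_iff.2 (by convert hμ; ext; simp))
  rwa [Finset.sum_singleton, (prob_compl_eq_zero_iff (measurableSet_singleton a)).1 hμ,
    one_smul] at h

variable {G : Type*} [MeasurableSpace G] [AddGroup G] [MeasurableNeg G]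
  [MeasurableSingletonClass G]

lemma integral_lt_one_of_add_comp_neg_lt_two (μ : Measure G) [IsProbabilityMeasure μ]
    [μ.IsNegInvariant] (hμ : μ ≠ Measure.dirac 0) {f : G → ℝ} (hf : Integrable f μ)
    (hle : ∀ z, f z + f (-z) ≤ 2) (hlt : ∀ z ≠ 0, f z + f (-z) < 2) :
    ∫ z, f z ∂μ < 1 := by
  have hsum : Integrable (fun z ↦ f z + f (-z)) μ := hf.add hf.comp_neg
  have hgap : 0 < ∫ z, (2 - (f z + f (-z))) ∂μ := by
    rw [integral_pos_iff_support_of_nonneg (fun z ↦ sub_nonneg.2 (hle z))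
      ((integrable_const 2).sub hsum)]
    refine pos_iff_ne_zero.2 (fun h ↦ Measure.measure_compl_singleton_ne_zero hμ ?_)
    refine measure_mono_null (fun z hz ↦ ?_) h
    exact (sub_pos.2 (hlt z hz)).ne'
  rw [integral_sub (integrable_const 2) hsum, integral_add hf hf.comp_neg,
    integral_neg_eq_self f μ, integral_const, probReal_univ, one_smul] at hgap
  linarith

lemma integrable_exp_sub_half_sq {α : Type*} [MeasurableSpace α] (μ : Measure α)
    [IsFiniteMeasure μ] {g : α → ℝ} (hg : Measurable g) :
    Integrable (fun z ↦ Real.exp (g z - g z ^ 2 / 2)) μ := by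
  refine Integrable.of_bound (by fun_prop) (Real.exp (1 / 2)) (.of_forall fun z ↦ ?_)
  rw [Real.norm_of_nonneg (Real.exp_pos _).le, Real.exp_le_exp]
  nlinarith [sq_nonneg (g z - 1)]

lemma integral_exp_mul_sub_half_sq_lt_one (μ : Measure ℝ) [IsProbabilityMeasure μ]
    [μ.IsNegInvariant] (hμ : μ ≠ Measure.dirac 0) {t : ℝ} (ht : t ≠ 0) :
    ∫ z, Real.exp (t * z - (t * z) ^ 2 / 2) ∂μ < 1 := by
  refine integral_lt_one_of_add_comp_neg_lt_two μ hμ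
    (integrable_exp_sub_half_sq μ (measurable_const_mul t)) (fun z ↦ ?_) (fun z hz ↦ ?_)
  · simpa only [mul_neg] using Real.exp_sub_half_sq_add_exp_neg_sub_half_sq_le_two (t * z)
  · simpa only [mul_neg] using
      Real.exp_sub_half_sq_add_exp_neg_sub_half_sq_lt_two (mul_ne_zero ht hz)

end MeasureTheory

theorem cramer_test_point_gt
    (ρ : Measure ℝ) [IsProbabilityMeasure ρ]
    (hsym : ρ.map (fun z => -z) = ρ) (hρ : ρ ≠ Measure.dirac 0)
    (x y : ℝ) (hx : x ≠ 0) (hy : y ≠ 0) :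
    (x / y) * x + (-(x ^ 2 / (2 * y ^ 2))) * y
      - Real.log (∫ z, Real.exp ((x / y) * z - (x ^ 2 / (2 * y ^ 2)) * z ^ 2) ∂ρ)
      > x ^ 2 / (2 * y) := by
  have : ρ.IsNegInvariant := ⟨hsym⟩
  have hlin : (x / y) * x + (-(x ^ 2 / (2 * y ^ 2))) * y = x ^ 2 / (2 * y) := by
    field_simp
    ring
  have hquad (z : ℝ) : (x / y) * z - (x ^ 2 / (2 * y ^ 2)) * z ^ 2
      = (x / y) * z - ((x / y) * z) ^ 2 / 2 := by
    ring
  simp_rw [hlin, hquad]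
  have hlt := integral_exp_mul_sub_half_sq_lt_one ρ hρ (div_ne_zero hx hy)
  have hpos := integral_exp_pos (integrable_exp_sub_half_sq ρ (measurable_const_mul (x / y)))
  linarith [Real.log_neg hpos hlt]
end
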